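/- arXiv:0903.2177 — 7 statements merged into one kernel-verified Lean document; each statement's English description precedes it below -/
import Mathlib

section
/- Let (f_i : X_i → Y_i)_{i∈I} be a set-indexed family of functions between topological spaces and g : X → Y a function. If f_i ≤₂ g for all i ∈ I, then ⌈f_i⌉_{i∈I} ≤₂ g, where ⌈f_i⌉(i,x) = (i, f_i(x)) is defined on the coproduct ∐X_i with values in ∐Y_i. -/
def Red2 {X₁ Y₁ X₂ Y₂ : Type*}
    [TopologicalSpace X₁] [TopologicalSpace Y₁] [TopologicalSpace X₂] [TopologicalSpace Y₂]
    (f : X₁ → Y₁) (g : X₂ → Y₂) : Prop :=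
  ∃ (A : Set (X₁ × Y₂)) (F : A → Y₁) (G : X₁ → X₂),
    Continuous F ∧ Continuous G ∧
      ∀ x : X₁, ∃ h : (x, g (G x)) ∈ A, f x = F ⟨(x, g (G x)), h⟩

def coprodMap {I : Type*} {X Y : I → Type*} (f : ∀ i, X i → Y i) :
    (Σ i, X i) → Σ i, Y i :=
  fun p => ⟨p.1, f p.1 p.2⟩

/-!
The domains `Aᵢ ⊆ Xᵢ × V` of the reductions `fᵢ ≤₂ g` glue to `∐ Aᵢ`, which embeds into
`(∐ Xᵢ) × V` because products distribute over coproducts. The `Fᵢ` and `Gᵢ` glue to continuous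
maps on `∐ Aᵢ` and `∐ Xᵢ`, and together they reduce `⌈fᵢ⌉` to `g`.
-/

open Topology

theorem Red2.of_isEmbedding {X₁ Y₁ X₂ Y₂ Z : Type*}
    [TopologicalSpace X₁] [TopologicalSpace Y₁] [TopologicalSpace X₂] [TopologicalSpace Y₂]
    [TopologicalSpace Z] {f : X₁ → Y₁} {g : X₂ → Y₂} {e : Z → X₁ × Y₂} (he : IsEmbedding e)
    {F : Z → Y₁} (hF : Continuous F) {G : X₁ → X₂} (hG : Continuous G)
    (hfg : ∀ x, ∃ z, e z = (x, g (G x)) ∧ f x = F z) :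
    Red2 f g := by
  refine ⟨Set.range e, F ∘ he.toHomeomorph.symm, G,
    hF.comp he.toHomeomorph.symm.continuous, hG, fun x => ?_⟩
  obtain ⟨z, hez, hz⟩ := hfg x
  simp_rw [← hez]
  exact ⟨Set.mem_range_self z, by simp [hz, he.toHomeomorph_symm_apply]⟩

theorem isEmbedding_sigma_subtype_prod {I V : Type*} {X : I → Type*}
    [∀ i, TopologicalSpace (X i)] [TopologicalSpace V] (A : ∀ i, Set (X i × V)) :
    IsEmbedding fun p : Σ i, A i => ((⟨p.1, (p.2 : X p.1 × V).1⟩ : Σ i, X i), (p.2 : X p.1 × V).2) :=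
  Homeomorph.sigmaProdDistrib.symm.isEmbedding.comp <|
    (isEmbedding_sigmaMap Function.injective_id).2 fun _ => .subtypeVal

theorem stmt1 {I : Type*} {X Y : I → Type*}
    [∀ i, TopologicalSpace (X i)] [∀ i, TopologicalSpace (Y i)]
    {U V : Type*} [TopologicalSpace U] [TopologicalSpace V]
    (f : ∀ i, X i → Y i) (g : U → V)
    (h : ∀ i, Red2 (f i) g) :
    Red2 (coprodMap f) g := by
  choose A F G hF hG hfg using h
  refine Red2.of_isEmbedding (isEmbedding_sigma_subtype_prod A)
    (F := Sigma.map id F) (continuous_sigma_map.2 hF) (G := fun p => G p.1 p.2)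
    (continuous_sigma hG) ?_
  rintro ⟨i, x⟩
  obtain ⟨hmem, hx⟩ := hfg i x
  exact ⟨⟨i, ⟨(x, g (G i x)), hmem⟩⟩, rfl, by simp [coprodMap, Sigma.map, hx]⟩
end

section
/- The poset of ≤₂-equivalence classes of functions is distributive in the following sense: if f : X → Y and g_i : X_i → Y_i (i ∈ I, a set) are functions with f ≤₂ ⌈g_i⌉_{i∈I}, then there exist functions f_i (restrictions of f to clopen subsets O_i of X forming a partition of X) such that f_i ≤₂ g_i for all i ∈ I and f ≡₂ ⌈f_i⌉_{i∈I}. -/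
/-!
Let `G` be the inner witness of `f ≤₂ ⌈g_i⌉`. Its first coordinate is continuous into the
discrete index set, so its fibres `O_i` form a clopen partition of `X`. On `O_i` the map `G`
factors continuously through the embedding `U_i ↪ ∐ U_j`, which yields `f|O_i ≤₂ g_i`. Because the
`O_i` are open, `x ↦ (i, x)` for `x ∈ O_i` is a continuous map `X → ∐ O_i`, which yields
`f ≤₂ ⌈f|O_i⌉`; and `⌈f|O_i⌉ ≤₂ f` holds for any family of subsets, via `(i, x) ↦ x`.
-/

section Red2Via

variable {X₁ Y₁ X₂ Y₂ : Type*} [TopologicalSpace X₁] [TopologicalSpace Y₁] [TopologicalSpace Y₂]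

def Red2Via (f : X₁ → Y₁) (g : X₂ → Y₂) (G : X₁ → X₂) : Prop :=
  ∃ (A : Set (X₁ × Y₂)) (F : A → Y₁), Continuous F ∧
    ∀ x : X₁, ∃ h : (x, g (G x)) ∈ A, f x = F ⟨(x, g (G x)), h⟩

theorem red2_iff_exists_red2Via [TopologicalSpace X₂] {f : X₁ → Y₁} {g : X₂ → Y₂} :
    Red2 f g ↔ ∃ G, Continuous G ∧ Red2Via f g G :=
  ⟨fun ⟨A, F, G, hF, hG, hfg⟩ => ⟨G, hG, A, F, hF, hfg⟩,
    fun ⟨G, hG, A, F, hF, hfg⟩ => ⟨A, F, G, hF, hG, hfg⟩⟩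

theorem red2_of_continuous [TopologicalSpace X₂] {f : X₁ → Y₁} {g : X₂ → Y₂}
    (F : X₁ × Y₂ → Y₁) (G : X₁ → X₂) (hF : Continuous F) (hG : Continuous G)
    (hfg : ∀ x, f x = F (x, g (G x))) : Red2 f g :=
  ⟨Set.univ, F ∘ Subtype.val, G, hF.comp continuous_subtype_val, hG,
    fun x => ⟨Set.mem_univ _, hfg x⟩⟩

variable {f : X₁ → Y₁} {g : X₂ → Y₂} {G : X₁ → X₂}

theorem Red2Via.precomp {Z : Type*} [TopologicalSpace Z] (h : Red2Via f g G) {φ : Z → X₁}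
    (hφ : Continuous φ) : Red2Via (f ∘ φ) g (G ∘ φ) := by
  obtain ⟨A, F, hF, hfg⟩ := h
  refine ⟨{p | (φ p.1, p.2) ∈ A}, fun p => F ⟨(φ p.1.1, p.1.2), p.2⟩, ?_, fun z => hfg (φ z)⟩
  exact hF.comp ((((hφ.comp continuous_fst).prodMk continuous_snd).comp
    continuous_subtype_val).subtype_mk _)

theorem Red2Via.of_factor {Z W : Type*} [TopologicalSpace W] {e : Z → X₂} {G' : X₁ → Z}
    {g' : Z → W} {ψ : W → Y₂} (h : Red2Via f g (e ∘ G')) (hψ : Continuous ψ)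
    (hg : ∀ z, g (e z) = ψ (g' z)) : Red2Via f g' G' := by
  obtain ⟨A, F, hF, hfg⟩ := h
  refine ⟨{p | (p.1, ψ p.2) ∈ A}, fun p => F ⟨(p.1.1, ψ p.1.2), p.2⟩, ?_, fun x => ?_⟩
  · exact hF.comp (((continuous_fst.prodMk (hψ.comp continuous_snd)).comp
      continuous_subtype_val).subtype_mk _)
  · obtain ⟨hA, hx⟩ := hfg x
    simp only [Function.comp_apply, hg] at hA hx
    exact ⟨hA, hx⟩

end Red2Via

section Sigma

variable {I : Type*} {X Y : Type*} [TopologicalSpace X] [TopologicalSpace Y]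

theorem exists_continuous_sigmaMk_comp_eq {U : I → Type*} [∀ i, TopologicalSpace (U i)]
    {h : X → Σ i, U i} (hh : Continuous h) {i : I} (hi : ∀ x, (h x).1 = i) :
    ∃ h' : X → U i, Continuous h' ∧ Sigma.mk i ∘ h' = h := by
  have hrange : ∀ x, h x ∈ Set.range (Sigma.mk i) := fun x => by
    rw [Set.range_sigmaMk]; exact hi x
  choose h' hh' using hrange
  have hcomp : Sigma.mk i ∘ h' = h := funext hh'
  exact ⟨h', Topology.IsEmbedding.sigmaMk.continuous_iff.mpr (hcomp ▸ hh), hcomp⟩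

theorem isClopen_setOf_sigma_fst_eq {U : I → Type*} [∀ i, TopologicalSpace (U i)]
    {G : X → Σ i, U i} (hG : Continuous G) (i : I) : IsClopen {x | (G x).1 = i} := by
  change IsClopen (G ⁻¹' (Sigma.fst ⁻¹' {i}))
  rw [← Set.range_sigmaMk]
  exact isClopen_range_sigmaMk.preimage hG

theorem Red2Via.red2_restrict_fiber {U V : I → Type*} [∀ i, TopologicalSpace (U i)]
    [∀ i, TopologicalSpace (V i)] {f : X → Y} {g : ∀ i, U i → V i} {G : X → Σ i, U i}
    (h : Red2Via f (coprodMap g) G) (hG : Continuous G) (i : I) :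
    Red2 (fun x : {x | (G x).1 = i} => f x) (g i) := by
  obtain ⟨Gi, hGi, hGGi⟩ := exists_continuous_sigmaMk_comp_eq
    (hG.comp continuous_subtype_val) (fun x : {x | (G x).1 = i} => x.2)
  have hrestr := h.precomp (φ := ((↑) : {x | (G x).1 = i} → X)) continuous_subtype_val
  rw [← hGGi] at hrestr
  exact red2_iff_exists_red2Via.mpr
    ⟨Gi, hGi, hrestr.of_factor continuous_sigmaMk fun _ => rfl⟩

theorem continuous_sigmaMk_fiber {c : X → I} (hc : ∀ i, IsOpen {x | c x = i}) :
    Continuous fun x => (⟨c x, ⟨x, rfl⟩⟩ : Σ i, ({x | c x = i} : Set X)) := by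
  refine continuous_def.mpr fun s hs => ?_
  have hpre : (fun x => (⟨c x, ⟨x, rfl⟩⟩ : Σ i, ({x | c x = i} : Set X))) ⁻¹' s =
      ⋃ i, Subtype.val '' (Sigma.mk (β := fun j => ({x | c x = j} : Set X)) i ⁻¹' s) := by
    ext x
    simp only [Set.mem_preimage, Set.mem_iUnion, Set.mem_image]
    constructor
    · exact fun hx => ⟨c x, ⟨x, rfl⟩, hx, rfl⟩
    · rintro ⟨i, y, hy, rfl⟩
      convert hy using 1
      exact Sigma.subtype_ext y.2 rfl
  rw [hpre]
  exact isOpen_iUnion fun i => (hc i).isOpenMap_subtype_val _ (isOpen_sigma_iff.mp hs i)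

theorem red2_coprodMap_restrict_fiber (f : X → Y) {c : X → I} (hc : ∀ i, IsOpen {x | c x = i}) :
    Red2 f (coprodMap fun i (x : ({x | c x = i} : Set X)) => f x) :=
  red2_of_continuous (fun p => p.2.2) _ ((continuous_sigma fun _ => continuous_id).comp
    continuous_snd) (continuous_sigmaMk_fiber hc) fun _ => rfl

theorem red2_coprodMap_restrict (f : X → Y) (S : I → Set X) :
    Red2 (coprodMap fun i (x : S i) => f x) f := by
  have hdistrib : Continuous fun q : Σ i, S i × Y => Sigma.mk (β := fun _ : I => Y) q.1 q.2.2 :=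
    continuous_sigma fun _ => continuous_sigmaMk.comp continuous_snd
  have hF : Continuous fun p : (Σ i, S i) × Y => Sigma.mk (β := fun _ : I => Y) p.1.1 p.2 :=
    hdistrib.comp (Homeomorph.sigmaProdDistrib (X := fun i => S i)).continuous
  exact red2_of_continuous _ (fun p => p.2.1) hF (continuous_sigma fun _ => continuous_subtype_val)
    fun _ => rfl

end Sigma

/-- Distributivity of `≤₂`: if `f ≤₂ ⌈g_i⌉`, then `X` partitions into clopen sets
`O_i` such that the restrictions `f_i = f|_{O_i}` satisfy `f_i ≤₂ g_i` and
`f ≡₂ ⌈f_i⌉`. -/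
theorem stmt9 {X Y : Type*} [TopologicalSpace X] [TopologicalSpace Y]
    {I : Type*} {U V : I → Type*}
    [∀ i, TopologicalSpace (U i)] [∀ i, TopologicalSpace (V i)]
    (f : X → Y) (g : ∀ i, U i → V i)
    (h : Red2 f (coprodMap g)) :
    ∃ O : I → Set X,
      (∀ i, IsClopen (O i)) ∧
      (∀ i j, i ≠ j → Disjoint (O i) (O j)) ∧
      (⋃ i, O i) = Set.univ ∧
      (∀ i, Red2 (fun x : O i => f x.1) (g i)) ∧
      Red2 f (coprodMap fun i => fun x : O i => f x.1) ∧
      Red2 (coprodMap fun i => fun x : O i => f x.1) f := by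
  obtain ⟨G, hG, hfG⟩ := red2_iff_exists_red2Via.mp h
  have hclopen := isClopen_setOf_sigma_fst_eq hG
  refine ⟨fun i => {x | (G x).1 = i}, hclopen, fun i j hij => ?_,
    Set.iUnion_eq_univ_iff.mpr fun x => ⟨_, rfl⟩, hfG.red2_restrict_fiber hG,
    red2_coprodMap_restrict_fiber f fun i => (hclopen i).isOpen, red2_coprodMap_restrict f _⟩
  exact Set.disjoint_left.mpr fun x hi hj => hij (hi.symm.trans hj)
end

section
/- For functions f : X → Y and g : U → V between topological spaces, if f ≤₂ g then bas(f) ≤ bas(g), where bas(h) is the least cardinality of a partition of the domain of h into sets on each of which h is continuous (with subspace topology). -/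
universe u

/-- `p` is a partition of the domain of `f` into sets of continuity. -/
def IsContPartition {X : Type*} {Y : Type*} [TopologicalSpace X] [TopologicalSpace Y]
    (f : X → Y) (p : Set (Set X)) : Prop :=
  (∀ U ∈ p, ∀ V ∈ p, U ≠ V → Disjoint U V) ∧ ⋃₀ p = Set.univ ∧
    ∀ U ∈ p, Continuous fun x : U => f x.1

/-- The Basesize of `f`: least cardinality of a partition for `f`. -/
noncomputable def bas {X : Type u} {Y : Type*} [TopologicalSpace X] [TopologicalSpace Y]
    (f : X → Y) : Cardinal.{u} :=
  sInf {c | ∃ p : Set (Set X), IsContPartition f p ∧ Cardinal.mk ↥p = c}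

theorem stmt10 {X Y U V : Type u}
    [TopologicalSpace X] [TopologicalSpace Y] [TopologicalSpace U] [TopologicalSpace V]
    (f : X → Y) (g : U → V) (h : Red2 f g) :
    bas f ≤ bas g := by
  obtain ⟨A, F, G, hF, hG, hspec⟩ := h
  apply le_csInf
  · refine ⟨Cardinal.mk ↥(Set.range (fun u : U => ({u} : Set U))), Set.range (fun u : U => ({u} : Set U)), ⟨?_, ?_, ?_⟩, rfl⟩
    · rintro S ⟨u, rfl⟩ T ⟨v, rfl⟩ hne
      simp only [Set.disjoint_singleton]
      intro h; exact hne (by rw [h])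
    · ext x; simp only [Set.mem_sUnion, Set.mem_univ, iff_true]
      exact ⟨{x}, ⟨x, rfl⟩, rfl⟩
    · rintro S ⟨u, rfl⟩
      apply continuous_of_const
      rintro ⟨x, hx⟩ ⟨y, hy⟩
      simp only [Set.mem_singleton_iff] at hx hy
      simp [hx, hy]
  · rintro c ⟨p, ⟨hdisj, hcov, hcont⟩, rfl⟩
    have key : Cardinal.mk ↥((fun S : Set U => G ⁻¹' S) '' p) ≤ Cardinal.mk ↥p :=
      Cardinal.mk_image_le
    refine le_trans (csInf_le' ⟨(fun S : Set U => G ⁻¹' S) '' p, ⟨?_, ?_, ?_⟩, rfl⟩) key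
    · rintro W₁ ⟨S₁, hS₁, rfl⟩ W₂ ⟨S₂, hS₂, rfl⟩ hne
      refine Disjoint.preimage G (hdisj S₁ hS₁ S₂ hS₂ ?_)
      rintro rfl; exact hne rfl
    · ext x; simp only [Set.mem_sUnion, Set.mem_univ, iff_true]
      have : G x ∈ ⋃₀ p := by rw [hcov]; trivial
      obtain ⟨S, hS, hxS⟩ := this
      exact ⟨G ⁻¹' S, ⟨S, hS, rfl⟩, hxS⟩
    · rintro W ⟨S, hS, rfl⟩
      have hgS : Continuous fun s : S => g s.1 := hcont S hS
      have hmapS : Continuous fun x : (G ⁻¹' S) => (⟨G x.1, x.2⟩ : S) :=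
        Continuous.subtype_mk (hG.comp continuous_subtype_val) _
      have hginA : ∀ x : (G ⁻¹' S), (x.1, g (G x.1)) ∈ A := fun x => (hspec x.1).1
      have hφ : Continuous fun x : (G ⁻¹' S) => (⟨(x.1, g (G x.1)), hginA x⟩ : A) := by
        refine Continuous.subtype_mk ?_ _
        exact continuous_subtype_val.prodMk (hgS.comp hmapS)
      have : (fun x : (G ⁻¹' S) => f x.1)
          = (fun x : (G ⁻¹' S) => F ⟨(x.1, g (G x.1)), hginA x⟩) := by
        funext x
        obtain ⟨hm, he⟩ := hspec x.1
        exact he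
      rw [this]
      exact hF.comp hφ
end

section
/- For any function f : X → Y between topological spaces, bas(f) ≤ Lev¹(f), i.e., if the transfinite sequence L¹_0 = X, L¹_{α+1} = {x ∈ L¹_α : f restricted to L¹_α is discontinuous at x}, L¹_γ = ⋂_{α<γ} L¹_α (γ limit) reaches ∅ at stage λ, then X can be partitioned into at most |λ| many sets on each of which f is continuous. -/
/-!
The layers `L¹_α \ L¹_{α+1}`, `α < λ`, do the job. They are pairwise disjoint because `L¹` is
decreasing. They cover `X` because the first stage at which a point leaves `L¹` cannot be `0` or a
limit (`L¹_0 = X` and `L¹` is intersective at limits), so it is a successor `α + 1`. And `f` is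
continuous on `L¹_α \ L¹_{α+1}` because each of its points is a continuity point of `f` on `L¹_α`.
-/

universe u v

/-- The (unclosed) level hierarchy `L¹_α(f)`. -/
noncomputable def L1 {X : Type u} {Y : Type v} [TopologicalSpace X] [TopologicalSpace Y]
    (f : X → Y) (o : Ordinal.{u}) : Set X :=
  Ordinal.limitRecOn o Set.univ
    (fun _ ih => {x | x ∈ ih ∧ ¬ ContinuousWithinAt f ih x})
    (fun o _ ih => ⋂ p : {o' : Ordinal.{u} // o' < o}, ih p.1 p.2)

open Function Order Set

theorem Antitone.pairwise_disjoint_on_sdiff_add_one {α β : Type*} [LinearOrder α] [Add α] [One α]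
    [SuccAddOrder α] {s : α → Set β} (hs : Antitone s) :
    Pairwise (Disjoint on (fun a => s a \ s (a + 1))) :=
  (pairwise_disjoint_on _).2 fun _ _ hab =>
    disjoint_sdiff_left.mono_right (sdiff_subset.trans (hs (add_one_le_of_lt hab)))

theorem Ordinal.mk_image_Iio_le_card {β : Type u} (g : Ordinal.{u} → β) (o : Ordinal.{u}) :
    Cardinal.mk (g '' Iio o) ≤ o.card := by
  have h := Cardinal.mk_image_le_lift (f := g) (s := Iio o)
  rwa [Cardinal.mk_Iio_ordinal, Cardinal.lift_lift, Cardinal.lift_le] at h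

section L1

variable {X : Type u} {Y : Type v} [TopologicalSpace X] [TopologicalSpace Y] (f : X → Y)

theorem L1_zero : L1 f 0 = univ := Ordinal.limitRecOn_zero _ _ _

theorem L1_add_one (a : Ordinal.{u}) :
    L1 f (a + 1) = {x | x ∈ L1 f a ∧ ¬ ContinuousWithinAt f (L1 f a) x} :=
  Ordinal.limitRecOn_add_one _ _ _ _

theorem L1_limit {o : Ordinal.{u}} (ho : IsSuccLimit o) :
    L1 f o = ⋂ a : {a : Ordinal.{u} // a < o}, L1 f a.1 :=
  Ordinal.limitRecOn_limit _ _ _ _ ho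

theorem L1_add_one_subset (a : Ordinal.{u}) : L1 f (a + 1) ⊆ L1 f a := by
  rw [L1_add_one]
  exact fun _ hx => hx.1

theorem L1_antitone : Antitone (L1 f) := by
  refine antitone_iff_forall_lt.2 fun a b hab => ?_
  induction b using Ordinal.limitRecOn generalizing a with
  | zero => exact absurd hab not_lt_zero
  | add_one c ih =>
    rcases (lt_add_one_iff.1 hab).eq_or_lt with rfl | hac
    · exact L1_add_one_subset f a
    · exact (L1_add_one_subset f c).trans (ih a hac)
  | limit o ho _ =>
    rw [L1_limit f ho]
    exact iInter_subset (fun a : {a : Ordinal.{u} // a < o} => L1 f a.1) ⟨a, hab⟩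

theorem continuousOn_L1_sdiff_add_one (a : Ordinal.{u}) :
    ContinuousOn f (L1 f a \ L1 f (a + 1)) := fun x hx => by
  have hcont : ContinuousWithinAt f (L1 f a) x := by
    by_contra hdisc
    exact hx.2 ((L1_add_one f a) ▸ ⟨hx.1, hdisc⟩)
  exact hcont.mono sdiff_subset

theorem exists_lt_mem_L1_sdiff_add_one {x : X} {o : Ordinal.{u}} (hx : x ∉ L1 f o) :
    ∃ a < o, x ∈ L1 f a \ L1 f (a + 1) := by
  induction o using Ordinal.limitRecOn with
  | zero => exact absurd (L1_zero f ▸ mem_univ x) hx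
  | add_one c ih =>
    by_cases hxc : x ∈ L1 f c
    · exact ⟨c, lt_add_one c, hxc, hx⟩
    · obtain ⟨a, hac, hxa⟩ := ih hxc
      exact ⟨a, hac.trans (lt_add_one c), hxa⟩
  | limit o ho ih =>
    rw [L1_limit f ho, mem_iInter, not_forall] at hx
    obtain ⟨⟨c, hco⟩, hxc⟩ := hx
    obtain ⟨a, hac, hxa⟩ := ih c hco hxc
    exact ⟨a, hac.trans hco, hxa⟩

end L1

/-- `bas(f) ≤ Lev¹(f)`: if the hierarchy `L¹` reaches `∅` at stage `lam`, then `X`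
admits a partition into at most `|lam|` sets of continuity for `f`. -/
theorem stmt11 {X : Type u} {Y : Type v} [TopologicalSpace X] [TopologicalSpace Y]
    (f : X → Y) (lam : Ordinal.{u}) (h : L1 f lam = ∅) :
    ∃ p : Set (Set X), IsContPartition f p ∧ Cardinal.mk ↥p ≤ lam.card := by
  set layer : Ordinal.{u} → Set X := fun a => L1 f a \ L1 f (a + 1)
  refine ⟨layer '' Iio lam, ⟨?_, ?_, ?_⟩, Ordinal.mk_image_Iio_le_card layer lam⟩
  · rintro _ ⟨a, -, rfl⟩ _ ⟨b, -, rfl⟩ hne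
    exact (L1_antitone f).pairwise_disjoint_on_sdiff_add_one (ne_of_apply_ne layer hne)
  · refine eq_univ_of_forall fun x => ?_
    obtain ⟨a, ha, hx⟩ := exists_lt_mem_L1_sdiff_add_one f (h ▸ notMem_empty x : x ∉ L1 f lam)
    exact ⟨layer a, mem_image_of_mem layer ha, hx⟩
  · rintro _ ⟨a, -, rfl⟩
    exact (continuousOn_L1_sdiff_add_one f a).domRestrict
end

section
/- For a set-indexed family of functions (f_i : X_i → Y_i)_{i∈I}, bas(⌈f_i⌉_{i∈I}) = sup{bas(f_i) : i ∈ I}, where ⌈f_i⌉ is the coproduct function on ∐X_i and bas denotes the least cardinality of a partition of the domain into sets of continuity. -/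
universe u

/-!
Allow partitions indexed by a type `J` with possibly empty pieces: these can be reindexed along
any injection, so every `f i` has a partition indexed by one `J` with `#J = ⨆ i, bas (f i)`.
Gluing the `j`-th pieces of all the `f i` partitions `coprodMap f` into `#J` pieces, since each
`Sigma.mk i` is an open embedding and so continuity on a subset of the coproduct is checked
slice by slice. Conversely, the slices of a partition for `coprodMap f` partition each `f i`.
-/

open Set Function Topology Filter
open scoped Cardinal

theorem continuousOn_sigma_iff {ι : Type*} {X : ι → Type*} [∀ i, TopologicalSpace (X i)]
    {Z : Type*} [TopologicalSpace Z] {g : (Σ i, X i) → Z} {U : Set (Σ i, X i)} :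
    ContinuousOn g U ↔ ∀ i, ContinuousOn (g ∘ Sigma.mk i) (Sigma.mk i ⁻¹' U) := by
  refine ⟨fun h i => h.comp continuous_sigmaMk.continuousOn (mapsTo_preimage _ _), ?_⟩
  rintro h ⟨i, x⟩ hx
  rw [ContinuousWithinAt, ← IsOpenEmbedding.sigmaMk.map_nhdsWithin_preimage_eq, tendsto_map'_iff]
  exact h i x hx

theorem continuousOn_coprodMap_iff {ι : Type*} {X Y : ι → Type*} [∀ i, TopologicalSpace (X i)]
    [∀ i, TopologicalSpace (Y i)] {f : ∀ i, X i → Y i} {U : Set (Σ i, X i)} :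
    ContinuousOn (coprodMap f) U ↔ ∀ i, ContinuousOn (f i) (Sigma.mk i ⁻¹' U) := by
  rw [continuousOn_sigma_iff]
  exact forall_congr' fun i => IsEmbedding.sigmaMk.continuousOn_iff.symm

structure IsIndexedContPartition {X Y J : Type*} [TopologicalSpace X] [TopologicalSpace Y]
    (f : X → Y) (P : J → Set X) : Prop where
  pairwise_disjoint : Pairwise (Disjoint on P)
  iUnion_eq : ⋃ j, P j = univ
  continuousOn : ∀ j, ContinuousOn f (P j)

namespace IsIndexedContPartition

variable {X Y J : Type*} [TopologicalSpace X] [TopologicalSpace Y] {f : X → Y}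

theorem singleton (f : X → Y) : IsIndexedContPartition f fun x : X => ({x} : Set X) where
  pairwise_disjoint _ _ h := disjoint_singleton.2 h
  iUnion_eq := iUnion_of_singleton X
  continuousOn x := continuousOn_singleton f x

theorem of_isContPartition {p : Set (Set X)} (hp : IsContPartition f p) :
    IsIndexedContPartition f (Subtype.val : p → Set X) where
  pairwise_disjoint s t hst := hp.1 s s.2 t t.2 (Subtype.coe_injective.ne hst)
  iUnion_eq := by rw [← sUnion_eq_iUnion]; exact hp.2.1
  continuousOn s := continuousOn_iff_continuous_domRestrict.2 (hp.2.2 s s.2)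

theorem isContPartition_range {P : J → Set X} (h : IsIndexedContPartition f P) :
    IsContPartition f (range P) := by
  refine ⟨?_, by rw [sUnion_range, h.iUnion_eq], ?_⟩
  · rintro _ ⟨j, rfl⟩ _ ⟨k, rfl⟩ hne
    exact h.pairwise_disjoint (ne_of_apply_ne P hne)
  · rintro _ ⟨j, rfl⟩
    exact continuousOn_iff_continuous_domRestrict.1 (h.continuousOn j)

theorem extend {K : Type*} {P : J → Set X} (h : IsIndexedContPartition f P) {e : J → K}
    (he : Injective e) : IsIndexedContPartition f (Function.extend e P fun _ => ∅) where
  pairwise_disjoint k l hkl := by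
    rw [onFun]
    rcases em (∃ j, e j = k) with ⟨j, rfl⟩ | hk
    · rcases em (∃ j', e j' = l) with ⟨j', rfl⟩ | hl
      · rw [he.extend_apply, he.extend_apply]
        exact h.pairwise_disjoint (ne_of_apply_ne e hkl)
      · rw [extend_apply' _ _ _ hl]
        exact disjoint_empty _
    · rw [extend_apply' _ _ _ hk]
      exact empty_disjoint _
  iUnion_eq := eq_univ_of_forall fun x : X => by
    obtain ⟨j, hj⟩ := mem_iUnion.1 (h.iUnion_eq ▸ mem_univ x)
    exact mem_iUnion.2 ⟨e j, by rwa [he.extend_apply]⟩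
  continuousOn k := by
    rcases em (∃ j, e j = k) with ⟨j, rfl⟩ | hk
    · rw [he.extend_apply]
      exact h.continuousOn j
    · rw [extend_apply' _ _ _ hk]
      exact continuousOn_empty f

theorem sigma {ι : Type*} {X Y : ι → Type*} [∀ i, TopologicalSpace (X i)]
    [∀ i, TopologicalSpace (Y i)] {f : ∀ i, X i → Y i} {P : ∀ i, J → Set (X i)}
    (h : ∀ i, IsIndexedContPartition (f i) (P i)) :
    IsIndexedContPartition (coprodMap f) fun j => {z | z.2 ∈ P z.1 j} where
  pairwise_disjoint j k hjk :=
    disjoint_left.2 fun (z : Σ i, X i) hj hk => disjoint_left.1 ((h z.1).pairwise_disjoint hjk) hj hk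
  iUnion_eq := eq_univ_of_forall fun z : Σ i, X i => by
    simpa using ((h z.1).iUnion_eq ▸ mem_univ z.2 : z.2 ∈ ⋃ j, P z.1 j)
  continuousOn j := continuousOn_coprodMap_iff.2 fun i => (h i).continuousOn j

theorem preimage_sigmaMk {ι : Type*} {X Y : ι → Type*} [∀ i, TopologicalSpace (X i)]
    [∀ i, TopologicalSpace (Y i)] {f : ∀ i, X i → Y i} {Q : J → Set (Σ i, X i)}
    (h : IsIndexedContPartition (coprodMap f) Q) (i : ι) :
    IsIndexedContPartition (f i) fun j => Sigma.mk i ⁻¹' Q j where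
  pairwise_disjoint j k hjk := (h.pairwise_disjoint hjk).preimage _
  iUnion_eq := by rw [← preimage_iUnion, h.iUnion_eq, preimage_univ]
  continuousOn j := continuousOn_coprodMap_iff.1 (h.continuousOn j) i

end IsIndexedContPartition

section

variable {X J : Type u} {Y : Type*} [TopologicalSpace X] [TopologicalSpace Y] {f : X → Y}

theorem IsIndexedContPartition.bas_le {P : J → Set X} (h : IsIndexedContPartition f P) :
    bas f ≤ #J :=
  (csInf_le' (by exact ⟨_, h.isContPartition_range, rfl⟩)).trans Cardinal.mk_range_le

theorem exists_isContPartition_mk_eq_bas (f : X → Y) :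
    ∃ p : Set (Set X), IsContPartition f p ∧ #p = bas f :=
  show _ ∈ {c | ∃ p : Set (Set X), IsContPartition f p ∧ #p = c} from
  csInf_mem ⟨_, _, (IsIndexedContPartition.singleton f).isContPartition_range, rfl⟩

theorem exists_isIndexedContPartition_of_bas_le (h : bas f ≤ #J) :
    ∃ P : J → Set X, IsIndexedContPartition f P := by
  obtain ⟨p, hp, hmk⟩ := exists_isContPartition_mk_eq_bas f
  obtain ⟨e⟩ : Nonempty (p ↪ J) := (hmk ▸ h : #p ≤ #J)
  exact ⟨_, (IsIndexedContPartition.of_isContPartition hp).extend e.injective⟩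

end

section

variable {I : Type u} {X : I → Type u} {Y : I → Type*} [∀ i, TopologicalSpace (X i)]
  [∀ i, TopologicalSpace (Y i)]

theorem bas_le_bas_coprodMap (f : ∀ i, X i → Y i) (i : I) : bas (f i) ≤ bas (coprodMap f) := by
  obtain ⟨p, hp, hmk⟩ := exists_isContPartition_mk_eq_bas (coprodMap f)
  exact hmk ▸ ((IsIndexedContPartition.of_isContPartition hp).preimage_sigmaMk i).bas_le

theorem bas_coprodMap_le_iSup (f : ∀ i, X i → Y i) : bas (coprodMap f) ≤ ⨆ i, bas (f i) := by
  choose P hP using fun i => exists_isIndexedContPartition_of_bas_le (f := f i)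
    (J := (⨆ i, bas (f i)).out) (by rw [Cardinal.mk_out]; exact le_ciSup Cardinal.bddAbove_of_small i)
  simpa using (IsIndexedContPartition.sigma hP).bas_le

end

/-- `bas(⌈f_i⌉) = sup_i bas(f_i)`. -/
theorem stmt14 {I : Type u} {X Y : I → Type u}
    [∀ i, TopologicalSpace (X i)] [∀ i, TopologicalSpace (Y i)]
    (f : ∀ i, X i → Y i) :
    bas (coprodMap f) = ⨆ i, bas (f i) :=
  (bas_coprodMap_le_iSup f).antisymm (ciSup_le' (bas_le_bas_coprodMap f))
end

section
/- Let i ∈ {0,2}. For any functions f, g, h, the problems satisfy {f,g} ≤ᵢ {f} and {f,g} ≤ᵢ {g}, and {f,g} ≤ᵢ {h} implies f ≤ᵢ h or g ≤ᵢ h; consequently, if f and g are ≤ᵢ-incomparable functions, then there is no function h such that the singleton problem {h} is an infimum of {f} and {g} in the preorder of problems, so binary infima in the preorder of functions under ≤ᵢ generally fail to be infima in the preorder of problems. -/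
universe u

structure PFunc (X : Type*) (Z : Type*) where
  dom : Set X
  toFun : dom → Z

def PFunc.IsContinuous {X Z : Type*} [TopologicalSpace X] [TopologicalSpace Z]
    (f : PFunc X Z) : Prop :=
  Continuous f.toFun

noncomputable def PFunc.comp {X Y Z : Type*} (g : PFunc Y Z) (G : PFunc X Y) :
    PFunc X Z where
  dom := {x | ∃ h : x ∈ G.dom, G.toFun ⟨x, h⟩ ∈ g.dom}
  toFun := fun x => g.toFun ⟨G.toFun ⟨x.1, x.2.choose⟩, x.2.choose_spec⟩

/-- `P ≤₀ Q` for problems. -/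
def PRed0 {X Y Z : Type*} [TopologicalSpace X] [TopologicalSpace Y] [TopologicalSpace Z]
    (P : Set (PFunc X Z)) (Q : Set (PFunc Y Z)) : Prop :=
  ∃ G : PFunc X Y, G.IsContinuous ∧ ∀ g ∈ Q, g.comp G ∈ P

/-- The function `x ↦ F (x, g (G x))` built from partial `F`, `G` and `g`. -/
noncomputable def red2Apply {X₁ Y₁ X₂ Y₂ : Type*}
    (F : PFunc (X₁ × Y₂) Y₁) (G : PFunc X₁ X₂) (g : PFunc X₂ Y₂) : PFunc X₁ Y₁ :=
  F.comp ⟨(g.comp G).dom, fun x => (x.1, (g.comp G).toFun x)⟩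

/-- `P ≤₂ Q` for problems. -/
def PRed2 {X₁ Y₁ X₂ Y₂ : Type*}
    [TopologicalSpace X₁] [TopologicalSpace Y₁] [TopologicalSpace X₂] [TopologicalSpace Y₂]
    (P : Set (PFunc X₁ Y₁)) (Q : Set (PFunc X₂ Y₂)) : Prop :=
  ∃ (F : PFunc (X₁ × Y₂) Y₁) (G : PFunc X₁ X₂),
    F.IsContinuous ∧ G.IsContinuous ∧ ∀ g ∈ Q, red2Apply F G g ∈ P


namespace PFunc

theorem ext' {X Z : Type*} {f g : PFunc X Z} (hd : f.dom = g.dom)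
    (h : ∀ x (hf : x ∈ f.dom) (hg : x ∈ g.dom), f.toFun ⟨x, hf⟩ = g.toFun ⟨x, hg⟩) :
    f = g := by
  obtain ⟨df, tf⟩ := f
  obtain ⟨dg, tg⟩ := g
  simp only at hd
  subst hd
  simp only [mk.injEq, heq_eq_eq, true_and]
  funext x
  exact h x.1 x.2 x.2

theorem comp_cont {X Y Z : Type*} [TopologicalSpace X] [TopologicalSpace Y] [TopologicalSpace Z]
    {g : PFunc Y Z} {G : PFunc X Y} (hg : g.IsContinuous) (hG : G.IsContinuous) :
    (g.comp G).IsContinuous := by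
  have : (g.comp G).toFun = g.toFun ∘
      (fun x : (g.comp G).dom => (⟨G.toFun ⟨x.1, x.2.choose⟩, x.2.choose_spec⟩ : g.dom)) := rfl
  rw [IsContinuous, this]
  exact hg.comp (Continuous.subtype_mk
    (hG.comp (Continuous.subtype_mk continuous_subtype_val (fun x => x.2.choose))) _)

theorem comp_assoc {X Y Z W : Type*} (f : PFunc Z W) (G : PFunc Y Z) (H : PFunc X Y) :
    (f.comp G).comp H = f.comp (G.comp H) := by
  apply ext'
  · ext x
    constructor
    · rintro ⟨hx, h2, h3⟩
      exact ⟨⟨hx, h2⟩, h3⟩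
    · rintro ⟨⟨hx, h2⟩, h3⟩
      exact ⟨hx, h2, h3⟩
  · intros; rfl

def idP (X : Type*) : PFunc X X := ⟨Set.univ, fun x => x.1⟩

theorem idP_cont {X : Type*} [TopologicalSpace X] : (idP X).IsContinuous :=
  continuous_subtype_val

theorem comp_idP {X Z : Type*} (f : PFunc X Z) : f.comp (idP X) = f := by
  apply ext'
  · ext x
    exact ⟨fun ⟨_, h⟩ => h, fun h => ⟨trivial, h⟩⟩
  · intros; rfl

end PFunc

theorem pred0_strans {X Y Z W : Type*} [TopologicalSpace X] [TopologicalSpace Y]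
    [TopologicalSpace Z] [TopologicalSpace W]
    {a : PFunc X W} {b : PFunc Y W} {c : PFunc Z W}
    (h1 : PRed0 {a} {b}) (h2 : PRed0 {b} {c}) : PRed0 {a} {c} := by
  obtain ⟨G, hGc, hG⟩ := h1
  obtain ⟨G', hG'c, hG'⟩ := h2
  have hb : c.comp G' = b := hG' c rfl
  have ha : b.comp G = a := hG b rfl
  exact ⟨G'.comp G, PFunc.comp_cont hG'c hGc, fun k hk => by
    rw [Set.mem_singleton_iff] at hk
    subst hk
    rw [Set.mem_singleton_iff, ← PFunc.comp_assoc, hb, ha]⟩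

/-- The partial map `(x, z) ↦ (x, F' (G x, z))`. -/
noncomputable def pairE {X₁ Y₂ Y₃ X₂ : Type*}
    (F' : PFunc (X₂ × Y₃) Y₂) (G : PFunc X₁ X₂) : PFunc (X₁ × Y₃) (X₁ × Y₂) where
  dom := {p | ∃ hx : p.1 ∈ G.dom, (G.toFun ⟨p.1, hx⟩, p.2) ∈ F'.dom}
  toFun := fun p =>
    (p.1.1, F'.toFun ⟨(G.toFun ⟨p.1.1, p.2.choose⟩, p.1.2), p.2.choose_spec⟩)

theorem pairE_cont {X₁ Y₂ Y₃ X₂ : Type*}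
    [TopologicalSpace X₁] [TopologicalSpace Y₂] [TopologicalSpace Y₃] [TopologicalSpace X₂]
    {F' : PFunc (X₂ × Y₃) Y₂} {G : PFunc X₁ X₂}
    (hF' : F'.IsContinuous) (hG : G.IsContinuous) : (pairE F' G).IsContinuous := by
  have hval : Continuous fun p : (pairE F' G).dom => (p : X₁ × Y₃) := continuous_subtype_val
  refine Continuous.prodMk hval.fst ?_
  refine hF'.comp (Continuous.subtype_mk (Continuous.prodMk ?_ hval.snd) _)
  exact hG.comp (Continuous.subtype_mk hval.fst (fun p => p.2.choose))

theorem pred2_strans {X₁ Y₁ X₂ Y₂ X₃ Y₃ : Type*}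
    [TopologicalSpace X₁] [TopologicalSpace Y₁] [TopologicalSpace X₂] [TopologicalSpace Y₂]
    [TopologicalSpace X₃] [TopologicalSpace Y₃]
    {a : PFunc X₁ Y₁} {b : PFunc X₂ Y₂} {c : PFunc X₃ Y₃}
    (h1 : PRed2 {a} {b}) (h2 : PRed2 {b} {c}) : PRed2 {a} {c} := by
  obtain ⟨F, G, hFc, hGc, hFG⟩ := h1
  obtain ⟨F', G', hF'c, hG'c, hF'G'⟩ := h2
  have hb : red2Apply F' G' c = b := hF'G' c rfl
  have ha : red2Apply F G b = a := hFG b rfl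
  subst hb ha
  refine ⟨F.comp (pairE F' G), G'.comp G, PFunc.comp_cont hFc (pairE_cont hF'c hGc),
    PFunc.comp_cont hG'c hGc, ?_⟩
  intro k hk
  rw [Set.mem_singleton_iff] at hk
  subst hk
  rw [Set.mem_singleton_iff]
  apply PFunc.ext'
  · ext x
    constructor
    · rintro ⟨⟨⟨hx, h2⟩, h3⟩, ⟨hx2, h4⟩, h5⟩
      exact ⟨⟨hx, ⟨h2, h3⟩, h4⟩, h5⟩
    · rintro ⟨⟨hx, ⟨h2, h3⟩, h4⟩, h5⟩
      exact ⟨⟨⟨hx, h2⟩, h3⟩, ⟨hx, h4⟩, h5⟩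
  · intros; rfl

/-- Projection `(x, z) ↦ z` as a total `PFunc`. -/
noncomputable def sndF (X Z : Type*) : PFunc (X × Z) Z := ⟨Set.univ, fun p => p.1.2⟩

theorem sndF_cont {X Z : Type*} [TopologicalSpace X] [TopologicalSpace Z] :
    (sndF X Z).IsContinuous := by
  have hval : Continuous fun p : (sndF X Z).dom => (p : X × Z) := continuous_subtype_val
  exact hval.snd

theorem red2Apply_id {X Z : Type*} (f : PFunc X Z) :
    red2Apply (sndF X Z) (PFunc.idP X) f = f := by
  apply PFunc.ext'
  · ext x
    constructor
    · rintro ⟨⟨_, h⟩, -⟩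
      exact h
    · intro h
      exact ⟨⟨trivial, h⟩, trivial⟩
  · intros; rfl

theorem pred2_refl {X Z : Type*} [TopologicalSpace X] [TopologicalSpace Z]
    (f : PFunc X Z) (S : Set (PFunc X Z)) (hf : f ∈ S) : PRed2 S {f} :=
  ⟨sndF X Z, PFunc.idP X, sndF_cont, PFunc.idP_cont, fun k hk => by
    rw [Set.mem_singleton_iff] at hk
    subst hk
    rw [red2Apply_id]
    exact hf⟩

theorem pred0_refl {X Z : Type*} [TopologicalSpace X] [TopologicalSpace Z]
    (f : PFunc X Z) (S : Set (PFunc X Z)) (hf : f ∈ S) : PRed0 S {f} :=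
  ⟨PFunc.idP X, PFunc.idP_cont, fun k hk => by
    rw [Set.mem_singleton_iff] at hk
    subst hk
    rw [PFunc.comp_idP]
    exact hf⟩

/-- Binary infima of functions are in general not infima of problems: always
`{f,g} ≤ᵢ {f}`, `{f,g} ≤ᵢ {g}`, and `{f,g} ≤ᵢ {h}` implies `f ≤ᵢ h` or `g ≤ᵢ h`;
hence if `f`, `g` are incomparable, no `{h}` lying below `{f}` and `{g}` can lie
above `{f,g}`. This holds for `i = 0` and `i = 2`. -/
theorem stmt17 :
    (∀ (X Y Z : Type u) [TopologicalSpace X] [TopologicalSpace Y] [TopologicalSpace Z]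
        (f g : PFunc X Z) (h : PFunc Y Z),
      PRed0 {f, g} {f} ∧ PRed0 {f, g} {g} ∧
      (PRed0 {f, g} {h} → PRed0 {f} {h} ∨ PRed0 {g} {h}) ∧
      (¬ PRed0 {f} {g} → ¬ PRed0 {g} {f} →
        PRed0 {f, g} {h} → PRed0 {h} {f} → PRed0 {h} {g} → False)) ∧
    (∀ (X Z Y W : Type u) [TopologicalSpace X] [TopologicalSpace Z] [TopologicalSpace Y]
        [TopologicalSpace W]
        (f g : PFunc X Z) (h : PFunc Y W),
      PRed2 {f, g} {f} ∧ PRed2 {f, g} {g} ∧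
      (PRed2 {f, g} {h} → PRed2 {f} {h} ∨ PRed2 {g} {h}) ∧
      (¬ PRed2 {f} {g} → ¬ PRed2 {g} {f} →
        PRed2 {f, g} {h} → PRed2 {h} {f} → PRed2 {h} {g} → False)) := by
  constructor
  · intro X Y Z _ _ _ f g h
    refine ⟨pred0_refl f _ (Set.mem_insert _ _),
      pred0_refl g _ (Set.mem_insert_iff.mpr (Or.inr rfl)), ?_, ?_⟩
    · rintro ⟨G, hGc, hG⟩
      have := hG h rfl
      rcases Set.mem_insert_iff.mp this with heq | heq
      · exact Or.inl ⟨G, hGc, fun k hk => by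
          rw [Set.mem_singleton_iff] at hk; subst hk
          exact heq⟩
      · exact Or.inr ⟨G, hGc, fun k hk => by
          rw [Set.mem_singleton_iff] at hk; subst hk
          exact heq⟩
    · intro hfg hgf hfgh hhf hhg
      rcases (by
        rintro ⟨G, hGc, hG⟩
        have := hG h rfl
        rcases Set.mem_insert_iff.mp this with heq | heq
        · exact Or.inl ⟨G, hGc, fun k hk => by
            rw [Set.mem_singleton_iff] at hk; subst hk
            exact heq⟩
        · exact Or.inr ⟨G, hGc, fun k hk => by
            rw [Set.mem_singleton_iff] at hk; subst hk
            exact heq⟩ : PRed0 {f, g} {h} → PRed0 {f} {h} ∨ PRed0 {g} {h}) hfgh with hc | hc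
      · exact hfg (pred0_strans hc hhg)
      · exact hgf (pred0_strans hc hhf)
  · intro X Z Y W _ _ _ _ f g h
    have key : PRed2 {f, g} {h} → PRed2 {f} {h} ∨ PRed2 {g} {h} := by
      rintro ⟨F, G, hFc, hGc, hFG⟩
      have := hFG h rfl
      rcases Set.mem_insert_iff.mp this with heq | heq
      · exact Or.inl ⟨F, G, hFc, hGc, fun k hk => by
          rw [Set.mem_singleton_iff] at hk; subst hk
          exact heq⟩
      · exact Or.inr ⟨F, G, hFc, hGc, fun k hk => by
          rw [Set.mem_singleton_iff] at hk; subst hk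
          exact heq⟩
    refine ⟨pred2_refl f _ (Set.mem_insert _ _),
      pred2_refl g _ (Set.mem_insert_iff.mpr (Or.inr rfl)), key, ?_⟩
    intro hfg hgf hfgh hhf hhg
    rcases key hfgh with hc | hc
    · exact hfg (pred2_strans hc hhg)
    · exact hgf (pred2_strans hc hhf)
end

section
/- The continuous truth-table reducibility ≤_ct, defined by f ≤_ct g iff f ≤₂ ⌈gⁿ⌉_{n∈ℕ} (where gⁿ is the n-fold product function of g), is reflexive and transitive; transitivity follows from the equivalence ⌈fⁿ⌉_{n∈ℕ} ≡₂ (⌈fⁿ⌉_{n∈ℕ})^m for every function f and natural number m ≥ 1. -/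
/-!
Reflexivity is `f ≤₂ f¹ ≤₂ ⌈fⁿ⌉`. For transitivity, `≤₂` is transitive and preserved by
`n`-fold products and by index-preserving coproducts, so `f ≤₂ ⌈gⁿ⌉` and `g ≤₂ ⌈hᵏ⌉` give
`f ≤₂ ⌈(⌈hᵏ⌉)ⁿ⌉`, and it remains to flatten. For fixed `n`, `(⌈hᵏ⌉)ⁿ ≤₂ ⌈hᴺ⌉` by concatenating
the `n` input tuples into one of length `N = ∑ kᵢ` and cutting the answer back into pieces of
lengths `kᵢ`. These lengths are read off the original input and are locally constant in it, which
is what makes the cutting continuous. Taking the coproduct over `n` of these reductions, the index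
`n` can then be forgotten. The fixed-`n` reduction is also `(⌈fⁿ⌉)ᵐ ≤₂ ⌈fⁿ⌉`; the converse
projects onto one coordinate.
-/

universe u

/-- The `n`-fold product function `gⁿ`. -/
def funPow {X Y : Type*} (n : ℕ) (g : X → Y) : (Fin n → X) → (Fin n → Y) :=
  fun v i => g (v i)

/-- `⌈gⁿ⌉_{n∈ℕ}`. -/
def ctSup {X Y : Type*} (g : X → Y) : (Σ n : ℕ, Fin n → X) → Σ n : ℕ, Fin n → Y :=
  coprodMap fun n => funPow n g

/-- Continuous truth-table reducibility: `f ≤_ct g ⟺ f ≤₂ ⌈gⁿ⌉_{n∈ℕ}`. -/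
def ctRed {X₁ Y₁ X₂ Y₂ : Type*}
    [TopologicalSpace X₁] [TopologicalSpace Y₁] [TopologicalSpace X₂] [TopologicalSpace Y₂]
    (f : X₁ → Y₁) (g : X₂ → Y₂) : Prop :=
  Red2 f (ctSup g)

open Topology

section SigmaSummand

variable {ι : Type*} {π : ι → Type*} [∀ i, TopologicalSpace (π i)]

noncomputable def sigmaSummandHomeomorph (c : ι) : π c ≃ₜ {s : Σ i, π i | s.1 = c} :=
  IsOpenEmbedding.sigmaMk.isEmbedding.toHomeomorph.trans <| Homeomorph.setCongr <| by
    ext ⟨i, x⟩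
    constructor
    · rintro ⟨y, hy⟩
      cases hy
      rfl
    · rintro rfl
      exact ⟨x, rfl⟩

@[simp]
theorem sigmaSummandHomeomorph_symm_apply_self (s : Σ i, π i) :
    (sigmaSummandHomeomorph s.1).symm ⟨s, rfl⟩ = s.2 :=
  (sigmaSummandHomeomorph s.1).symm_apply_apply s.2

@[simp]
theorem sigmaSummandHomeomorph_symm_mk (c : ι) (x : π c) :
    (sigmaSummandHomeomorph c).symm ⟨⟨c, x⟩, rfl⟩ = x :=
  sigmaSummandHomeomorph_symm_apply_self ⟨c, x⟩

theorem isLocallyConstant_sigma_fst : IsLocallyConstant (Sigma.fst : (Σ i, π i) → ι) :=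
  isOpen_sigma_fst_preimage

end SigmaSummand

theorem IsLocallyConstant.continuous_of_continuousOn_fiber {W Z ι : Type*} [TopologicalSpace W]
    [TopologicalSpace Z] {c : W → ι} (hc : IsLocallyConstant c) {f : W → Z}
    (hf : ∀ i, ContinuousOn f {w | c w = i}) : Continuous f :=
  continuous_of_cover_nhds (fun w => ⟨c w, (hc.isOpen_fiber _).mem_nhds rfl⟩) hf

theorem continuous_funPow {X Y : Type*} [TopologicalSpace X] [TopologicalSpace Y] {g : X → Y}
    (hg : Continuous g) (n : ℕ) : Continuous (funPow n g) :=
  continuous_pi fun i => hg.comp (continuous_apply i)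

theorem continuous_coprodMap {I : Type*} {X Y : I → Type*} [∀ i, TopologicalSpace (X i)]
    [∀ i, TopologicalSpace (Y i)] {f : ∀ i, X i → Y i} (hf : ∀ i, Continuous (f i)) :
    Continuous (coprodMap f) :=
  continuous_sigma fun i => continuous_sigmaMk.comp (hf i)

theorem Red2.trans {X₁ Y₁ X₂ Y₂ X₃ Y₃ : Type*}
    [TopologicalSpace X₁] [TopologicalSpace Y₁] [TopologicalSpace X₂]
    [TopologicalSpace Y₂] [TopologicalSpace X₃] [TopologicalSpace Y₃]
    {f : X₁ → Y₁} {g : X₂ → Y₂} {h : X₃ → Y₃}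
    (hfg : Red2 f g) (hgh : Red2 g h) : Red2 f h := by
  obtain ⟨A₁, F₁, G₁, hF₁, hG₁, hf⟩ := hfg
  obtain ⟨A₂, F₂, G₂, hF₂, hG₂, hg⟩ := hgh
  refine ⟨{p | ∃ hp : (G₁ p.1, p.2) ∈ A₂, (p.1, F₂ ⟨_, hp⟩) ∈ A₁},
    fun q => F₁ ⟨(q.1.1, F₂ ⟨_, q.2.1⟩), q.2.2⟩, G₂ ∘ G₁, ?_, hG₂.comp hG₁, fun x => ?_⟩
  · refine hF₁.comp (.subtype_mk (.prodMk (continuous_fst.comp continuous_subtype_val) ?_) _)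
    exact hF₂.comp (.subtype_mk (((hG₁.comp continuous_fst).prodMk continuous_snd).comp
      continuous_subtype_val) _)
  · obtain ⟨hx₂, hgx⟩ := hg (G₁ x)
    obtain ⟨hx₁, hfx⟩ := hf x
    refine ⟨⟨hx₂, hgx ▸ hx₁⟩, hfx.trans ?_⟩
    congr

section Reductions

variable {X₁ Y₁ X₂ Y₂ : Type*} [TopologicalSpace X₁] [TopologicalSpace Y₁] [TopologicalSpace X₂]
  [TopologicalSpace Y₂]

theorem red2_funPow_of_one_le (g : X₁ → Y₁) {m : ℕ} (hm : 1 ≤ m) : Red2 g (funPow m g) :=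
  ⟨Set.univ, fun p => p.1.2 ⟨0, hm⟩, fun x _ => x,
    (continuous_apply _).comp (continuous_snd.comp continuous_subtype_val),
    continuous_pi fun _ => continuous_id, fun _ => ⟨trivial, rfl⟩⟩

theorem red2_funPow_ctSup (g : X₁ → Y₁) (m : ℕ) : Red2 (funPow m g) (ctSup g) := by
  refine ⟨{p | p.2.1 = m}, fun p => (sigmaSummandHomeomorph m).symm ⟨p.1.2, p.2⟩,
    fun v => ⟨m, v⟩, (sigmaSummandHomeomorph m).symm.continuous.comp
      (.subtype_mk (continuous_snd.comp continuous_subtype_val) _),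
    continuous_sigmaMk (σ := fun n => Fin n → X₁), fun v => ⟨rfl, ?_⟩⟩
  exact (sigmaSummandHomeomorph_symm_mk (π := fun n => Fin n → Y₁) m _).symm

theorem Red2.funPow_mono {f : X₁ → Y₁} {g : X₂ → Y₂} (hfg : Red2 f g) (n : ℕ) :
    Red2 (funPow n f) (funPow n g) := by
  obtain ⟨A, F, G, hF, hG, hf⟩ := hfg
  refine ⟨{p | ∀ i, (p.1 i, p.2 i) ∈ A}, fun q i => F ⟨(q.1.1 i, q.1.2 i), q.2 i⟩,
    funPow n G, continuous_pi fun i => hF.comp (.subtype_mk ?_ _), continuous_funPow hG n,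
    fun v => ⟨fun i => (hf (v i)).1, funext fun i => (hf (v i)).2⟩⟩
  exact ((continuous_apply i).comp continuous_fst).prodMk
    ((continuous_apply i).comp continuous_snd) |>.comp continuous_subtype_val

theorem red2_coprodMap_const {I : Type*} (g : X₁ → Y₁) :
    Red2 (coprodMap fun _ : I => g) g :=
  ⟨Set.univ, fun q => ⟨q.1.1.1, q.1.2⟩, fun s => s.2,
    (continuous_sigma (σ := fun _ : I => X₁ × Y₁) (f := fun p => (⟨p.1, p.2.2⟩ : Σ _ : I, Y₁))
        fun _ => continuous_sigmaMk.comp continuous_snd).comp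
      (Homeomorph.sigmaProdDistrib.continuous.comp continuous_subtype_val),
    continuous_sigma fun _ => continuous_id, fun _ => ⟨trivial, rfl⟩⟩

end Reductions

theorem Red2.coprodMap_mono {I : Type*} {X Y X' Y' : I → Type*} [∀ i, TopologicalSpace (X i)]
    [∀ i, TopologicalSpace (Y i)] [∀ i, TopologicalSpace (X' i)] [∀ i, TopologicalSpace (Y' i)]
    {f : ∀ i, X i → Y i} {g : ∀ i, X' i → Y' i} (hfg : ∀ i, Red2 (f i) (g i)) :
    Red2 (coprodMap f) (coprodMap g) := by
  choose A F G hF hG hf using hfg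
  let A' : Set ((Σ i, X i) × Σ i, Y' i) :=
    {p | ∃ e : p.2.1 = p.1.1, (p.1.2, (sigmaSummandHomeomorph p.1.1).symm ⟨p.2, e⟩) ∈ A p.1.1}
  refine ⟨A', fun q => ⟨q.1.1.1, F _ ⟨_, q.2.2⟩⟩, coprodMap G, ?_, continuous_coprodMap hG, ?_⟩
  · refine (isLocallyConstant_sigma_fst.comp_continuous
      (continuous_fst.comp continuous_subtype_val)).continuous_of_continuousOn_fiber fun i => ?_
    set S := {q : A' | q.1.1.1 = i}
    have hx (q : S) : q.1.1.1.1 = i := q.2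
    have hy (q : S) : q.1.1.2.1 = i := q.1.2.1.trans q.2
    have hA (q : S) : ((sigmaSummandHomeomorph i).symm ⟨q.1.1.1, hx q⟩,
        (sigmaSummandHomeomorph i).symm ⟨q.1.1.2, hy q⟩) ∈ A i := by
      obtain ⟨⟨⟨⟨j, x⟩, ⟨j', y⟩⟩, e, hq⟩, rfl : j = i⟩ := q
      obtain rfl : j' = j := e
      simpa only [sigmaSummandHomeomorph_symm_mk] using hq
    have hS (q : S) : (⟨i, F i ⟨_, hA q⟩⟩ : Σ i, Y i) = ⟨q.1.1.1.1, F _ ⟨_, q.1.2.2⟩⟩ := by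
      obtain ⟨⟨⟨⟨j, x⟩, ⟨j', y⟩⟩, e, hq⟩, rfl : j = i⟩ := q
      obtain rfl : j' = j := e
      simp only [sigmaSummandHomeomorph_symm_mk]
    have hval : Continuous fun q : S => q.1.1 := continuous_subtype_val.comp continuous_subtype_val
    have hx' := (sigmaSummandHomeomorph i).symm.continuous.comp
      (.subtype_mk (continuous_fst.comp hval) hx)
    have hy' := (sigmaSummandHomeomorph i).symm.continuous.comp
      (.subtype_mk (continuous_snd.comp hval) hy)
    rw [continuousOn_iff_continuous_domRestrict]
    exact (continuous_sigmaMk.comp <| (hF i).comp <| .subtype_mk (hx'.prodMk hy') hA).congr hS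
  · rintro ⟨i, x⟩
    obtain ⟨hx, hfx⟩ := hf i x
    refine ⟨⟨rfl, by simpa only [coprodMap, sigmaSummandHomeomorph_symm_mk] using hx⟩, ?_⟩
    simp only [coprodMap, sigmaSummandHomeomorph_symm_mk, hfx]

theorem Red2.ctSup_mono {X₁ Y₁ X₂ Y₂ : Type*} [TopologicalSpace X₁] [TopologicalSpace Y₁]
    [TopologicalSpace X₂] [TopologicalSpace Y₂] {f : X₁ → Y₁} {g : X₂ → Y₂} (hfg : Red2 f g) :
    Red2 (ctSup f) (ctSup g) :=
  Red2.coprodMap_mono fun n => hfg.funPow_mono n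

section Flatten

variable {Z : Type*} {k : ℕ}

def flattenTuples (u : Fin k → Σ n, Fin n → Z) : Σ N, Fin N → Z :=
  ⟨∑ i, (u i).1, fun j => (u (finSigmaFinEquiv.symm j).1).2 (finSigmaFinEquiv.symm j).2⟩

def unflattenTuples (κ : Fin k → ℕ) (w : Fin (∑ i, κ i) → Z) : Fin k → Σ n, Fin n → Z :=
  fun i => ⟨κ i, fun a => w (finSigmaFinEquiv ⟨i, a⟩)⟩

theorem unflattenTuples_flattenTuples (u : Fin k → Σ n, Fin n → Z) :
    unflattenTuples (fun i => (u i).1) (flattenTuples u).2 = u := by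
  funext i
  have h (a : Fin (u i).1) : (flattenTuples u).2 (finSigmaFinEquiv ⟨i, a⟩) = (u i).2 a := by
    simp only [flattenTuples]
    rw [Equiv.symm_apply_apply]
  simp only [unflattenTuples, h]

variable [TopologicalSpace Z]

theorem continuous_unflattenTuples (κ : Fin k → ℕ) : Continuous (unflattenTuples (Z := Z) κ) :=
  continuous_pi fun _ => continuous_sigmaMk.comp (continuous_pi fun _ => continuous_apply _)

theorem isLocallyConstant_tupleLengths :
    IsLocallyConstant fun (u : Fin k → Σ n, Fin n → Z) i => (u i).1 :=
  (IsLocallyConstant.iff_continuous _).2 <| continuous_pi fun i =>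
    ((IsLocallyConstant.iff_continuous _).1 isLocallyConstant_sigma_fst).comp (continuous_apply i)

theorem continuous_flattenTuples : Continuous (flattenTuples (Z := Z) (k := k)) := by
  refine isLocallyConstant_tupleLengths.continuous_of_continuousOn_fiber fun κ => ?_
  rw [continuousOn_iff_continuous_domRestrict]
  refine Continuous.congr (f := fun u : {u : Fin k → Σ n, Fin n → Z // (fun i => (u i).1) = κ} =>
    (⟨∑ i, κ i, fun j => (sigmaSummandHomeomorph (π := fun n => Fin n → Z) _).symm
      ⟨u.1 (finSigmaFinEquiv.symm j).1, congrFun u.2 _⟩ (finSigmaFinEquiv.symm j).2⟩ :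
        Σ N, Fin N → Z)) ?_ ?_
  · exact continuous_sigmaMk.comp <| continuous_pi fun j => (continuous_apply _).comp <|
      (sigmaSummandHomeomorph _).symm.continuous.comp <|
        .subtype_mk ((continuous_apply _).comp continuous_subtype_val) _
  · rintro ⟨u, hu⟩
    change (fun i => (u i).1) = κ at hu
    subst hu
    simp only [sigmaSummandHomeomorph_symm_apply_self]
    rfl

variable {W : Type*} [TopologicalSpace W]

noncomputable def unflattenAlong
    (q : {p : (Fin k → Σ n, Fin n → W) × (Σ N, Fin N → Z) // p.2.1 = ∑ i, (p.1 i).1}) :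
    Fin k → Σ n, Fin n → Z :=
  unflattenTuples _ ((sigmaSummandHomeomorph _).symm ⟨q.1.2, q.2⟩)

theorem continuous_unflattenAlong : Continuous (unflattenAlong (W := W) (Z := Z) (k := k)) := by
  refine (isLocallyConstant_tupleLengths.comp_continuous
    (continuous_fst.comp continuous_subtype_val)).continuous_of_continuousOn_fiber fun κ => ?_
  rw [continuousOn_iff_continuous_domRestrict]
  refine Continuous.congr (f := fun q : {q : {p : (Fin k → Σ n, Fin n → W) × Σ N, Fin N → Z //
      p.2.1 = ∑ i, (p.1 i).1} // (fun i => (q.1.1 i).1) = κ} =>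
    unflattenTuples κ ((sigmaSummandHomeomorph (π := fun n => Fin n → Z) _).symm
      ⟨q.1.1.2, q.1.2.trans (congrArg (fun κ => ∑ i, κ i) q.2)⟩)) ?_ ?_
  · exact (continuous_unflattenTuples κ).comp <|
      (sigmaSummandHomeomorph _).symm.continuous.comp <|
        .subtype_mk (continuous_snd.comp (continuous_subtype_val.comp continuous_subtype_val)) _
  · rintro ⟨⟨⟨u, w⟩, _⟩, hu⟩
    change (fun i => (u i).1) = κ at hu
    subst hu
    rfl

end Flatten

theorem red2_funPow_ctSup_ctSup {X Y : Type*} [TopologicalSpace X] [TopologicalSpace Y]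
    (h : X → Y) (k : ℕ) : Red2 (funPow k (ctSup h)) (ctSup h) := by
  refine ⟨_, unflattenAlong, flattenTuples, continuous_unflattenAlong, continuous_flattenTuples,
    fun u => ⟨rfl, ?_⟩⟩
  exact (unflattenTuples_flattenTuples (funPow k (ctSup h) u)).symm.trans
    (congrArg _ (sigmaSummandHomeomorph_symm_apply_self _).symm)

theorem red2_ctSup_ctSup {X Y : Type*} [TopologicalSpace X] [TopologicalSpace Y] (h : X → Y) :
    Red2 (ctSup (ctSup h)) (ctSup h) :=
  (Red2.coprodMap_mono fun k => red2_funPow_ctSup_ctSup h k).trans (red2_coprodMap_const _)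

/-- `≤_ct` is reflexive and transitive, and `⌈fⁿ⌉_{n∈ℕ} ≡₂ (⌈fⁿ⌉_{n∈ℕ})^m` for `m ≥ 1`. -/
theorem stmt19 :
    (∀ (X Y : Type u) [TopologicalSpace X] [TopologicalSpace Y] (f : X → Y), ctRed f f) ∧
    (∀ (X₁ Y₁ X₂ Y₂ X₃ Y₃ : Type u)
        [TopologicalSpace X₁] [TopologicalSpace Y₁] [TopologicalSpace X₂]
        [TopologicalSpace Y₂] [TopologicalSpace X₃] [TopologicalSpace Y₃]
        (f : X₁ → Y₁) (g : X₂ → Y₂) (h : X₃ → Y₃),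
      ctRed f g → ctRed g h → ctRed f h) ∧
    (∀ (X Y : Type u) [TopologicalSpace X] [TopologicalSpace Y] (f : X → Y) (m : ℕ),
      1 ≤ m →
      Red2 (ctSup f) (funPow m (ctSup f)) ∧ Red2 (funPow m (ctSup f)) (ctSup f)) := by
  refine ⟨?refl, ?trans, ?pow⟩
  case refl =>
    intro X Y _ _ f
    exact (red2_funPow_of_one_le f le_rfl).trans (red2_funPow_ctSup f 1)
  case trans =>
    intro X₁ Y₁ X₂ Y₂ X₃ Y₃ _ _ _ _ _ _ f g h hfg hgh
    exact hfg.trans (hgh.ctSup_mono.trans (red2_ctSup_ctSup h))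
  case pow =>
    intro X Y _ _ f m hm
    exact ⟨red2_funPow_of_one_le _ hm, red2_funPow_ctSup_ctSup f m⟩
end
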